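/- Let (μ_t)_{t≥0} be a continuous monotone convolution semigroup of probability measures on the unit circle S¹ whose K-transforms (K_t)_{t≥0} satisfy d/dt K_t(z) = −K_t(z)·u(K_t(z)) for a holomorphic generator u : 𝔻 → ℂ with Re u ≥ 0. Then for every t ≥ 0 the derivative of K_t at 0 equals e^{−t·u(0)}, and this is the first moment of μ_t: ∫_{S¹} x dμ_t(x) = e^{−t·u(0)}. -/

import Mathlib

/-!
Represent the first moment `m t = ∫ x dμ_t` as `K_t'(0)`. By Cauchy's formula on the circle
of radius `1/2`, `K_t'(0)` is a contour integral of `K_t`; since `|K_t(z)| ≤ |z|` (Schwarz) keeps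
`K_t` on that circle inside a compact set where `u` is bounded, we may differentiate under the
integral and find that `m' = (d/dz)(-K_t u(K_t))(0) = -u(0) m` for `t > 0`. With `m` continuous
on `[0, ∞)` (weak continuity) and `m 0 = 1` (`μ_0 = δ_1`), this forces `m t = e^{-t u(0)}`.
-/

open MeasureTheory Metric

noncomputable instance : MeasurableSpace Circle := borel Circle
instance : BorelSpace Circle := ⟨rfl⟩

/-- `ψ_μ(z) = ∫_{S¹} zx/(1-zx) dμ(x)` for a measure `μ` on the unit circle. -/
noncomputable def psiM (μ : Measure Circle) (z : ℂ) : ℂ :=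
  ∫ x : Circle, (z * x) / (1 - z * x) ∂μ

/-- The K-transform `K_μ(z) = ψ_μ(z)/(1 + ψ_μ(z))` of a measure on the unit circle. -/
noncomputable def Km (μ : Measure Circle) (z : ℂ) : ℂ :=
  psiM μ z / (1 + psiM μ z)

open Set

open Filter Topology Complex

lemma hasDerivAt_mul_div_one_sub_mul {a z : ℂ} (hz : 1 - z * a ≠ 0) :
    HasDerivAt (fun w => w * a / (1 - w * a)) (a / (1 - z * a) ^ 2) z := by
  have hnum : HasDerivAt (fun w => w * a) a z := by simpa using (hasDerivAt_id z).mul_const a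
  have hden : HasDerivAt (fun w => 1 - w * a) (-a) z := by simpa using hnum.const_sub 1
  exact (hnum.div hden hz).congr_deriv (by field_simp; ring)

lemma le_one_add_two_mul_re_div_one_sub {w : ℂ} (hw : ‖w‖ < 1) :
    (1 - ‖w‖) / (1 + ‖w‖) ≤ 1 + 2 * (w / (1 - w)).re := by
  have hne : 1 - w ≠ 0 := fun h => by simp [← sub_eq_zero.1 h] at hw
  have hN : 0 < normSq (1 - w) := normSq_pos.2 hne
  have hsq : ‖w‖ ^ 2 = w.re ^ 2 + w.im ^ 2 := by rw [Complex.sq_norm, normSq_apply]; ring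
  have hN_le : normSq (1 - w) ≤ (1 + ‖w‖) ^ 2 := by
    have : -‖w‖ ≤ w.re := neg_le_of_abs_le (abs_re_le_norm w)
    simp only [normSq_apply, sub_re, sub_im, one_re, one_im]
    nlinarith
  have hre : 1 + 2 * (w / (1 - w)).re = (1 - ‖w‖ ^ 2) / normSq (1 - w) := by
    have h : 1 + 2 * (w / (1 - w)) = (1 + w) / (1 - w) := by field_simp; ring
    rw [show 1 + 2 * (w / (1 - w)).re = (1 + 2 * (w / (1 - w))).re by simp, h, div_re, hsq]
    simp only [add_re, add_im, sub_re, sub_im, one_re, one_im]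
    ring
  calc (1 - ‖w‖) / (1 + ‖w‖) = (1 - ‖w‖ ^ 2) / (1 + ‖w‖) ^ 2 := by
        field_simp; ring
    _ ≤ (1 - ‖w‖ ^ 2) / normSq (1 - w) := by
        gcongr
        nlinarith [norm_nonneg w]
    _ = 1 + 2 * (w / (1 - w)).re := hre.symm

lemma one_sub_norm_le_norm_one_sub_mul_circle (z : ℂ) (x : Circle) :
    1 - ‖z‖ ≤ ‖1 - z * x‖ := by
  simpa [Circle.norm_coe] using norm_sub_norm_le (1 : ℂ) (z * x)

lemma one_sub_mul_circle_ne_zero {z : ℂ} (hz : ‖z‖ < 1) (x : Circle) : 1 - z * x ≠ 0 :=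
  norm_pos_iff.1 (by linarith [one_sub_norm_le_norm_one_sub_mul_circle z x])

@[simp] lemma Km_zero (μ : Measure Circle) : Km μ 0 = 0 := by simp [Km, psiM]

section KTransform

variable (μ : Measure Circle) [IsProbabilityMeasure μ]

lemma integrable_mul_circle_div_one_sub {z : ℂ} (hz : ‖z‖ < 1) :
    Integrable (fun x : Circle => z * x / (1 - z * x)) μ :=
  have hcont : Continuous (fun x : Circle => z * x / (1 - z * x)) :=
    .div (by fun_prop) (by fun_prop) (one_sub_mul_circle_ne_zero hz)
  hcont.integrable_of_hasCompactSupport (.of_compactSpace _)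

theorem hasDerivAt_psiM {z : ℂ} (hz : ‖z‖ < 1) :
    HasDerivAt (psiM μ) (∫ x : Circle, (x : ℂ) / (1 - z * x) ^ 2 ∂μ) z := by
  set δ := (1 - ‖z‖) / 2 with hδ_def
  have hδ : 0 < δ := by linarith
  have hnear (w : ℂ) (hw : w ∈ ball z δ) (x : Circle) : δ ≤ ‖1 - w * x‖ := by
    have := norm_le_norm_add_norm_sub' w z
    rw [mem_ball_iff_norm] at hw
    linarith [one_sub_norm_le_norm_one_sub_mul_circle w x]
  have hbound :
      ∀ᵐ x : Circle ∂μ, ∀ w ∈ ball z δ, ‖(x : ℂ) / (1 - w * x) ^ 2‖ ≤ (δ ^ 2)⁻¹ :=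
    .of_forall fun x w hw => by
      rw [norm_div, norm_pow, Circle.norm_coe, one_div]
      gcongr
      exact hnear w hw x
  have hderiv : ∀ᵐ x : Circle ∂μ, ∀ w ∈ ball z δ,
      HasDerivAt (fun w : ℂ => w * x / (1 - w * x)) ((x : ℂ) / (1 - w * x) ^ 2) w :=
    .of_forall fun x w hw =>
      hasDerivAt_mul_div_one_sub_mul (norm_pos_iff.1 (hδ.trans_le (hnear w hw x)))
  exact (hasDerivAt_integral_of_dominated_loc_of_deriv_le (ball_mem_nhds z hδ)
    (.of_forall fun w => Measurable.aestronglyMeasurable (by fun_prop))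
    (integrable_mul_circle_div_one_sub μ hz) (Measurable.aestronglyMeasurable (by fun_prop))
    hbound (integrable_const _) hderiv).2

-- `Re ψ_μ > -1/2` is exactly what makes `|K_μ| = |ψ_μ| / |1 + ψ_μ| < 1`.
lemma one_add_two_mul_re_psiM_pos {z : ℂ} (hz : ‖z‖ < 1) : 0 < 1 + 2 * (psiM μ z).re := by
  have hint := integrable_mul_circle_div_one_sub μ hz
  have hint_re : Integrable (fun x : Circle => (z * x / (1 - z * x)).re) μ := hint.re
  have hpos : 0 < (1 - ‖z‖) / (1 + ‖z‖) := by
    have := norm_nonneg z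
    exact div_pos (by linarith) (by linarith)
  have hpt (x : Circle) : (1 - ‖z‖) / (1 + ‖z‖) ≤ 1 + 2 * (z * x / (1 - z * x)).re := by
    have hzx : ‖z * x‖ = ‖z‖ := by simp [Circle.norm_coe]
    have := le_one_add_two_mul_re_div_one_sub (w := z * x) (hzx ▸ hz)
    rwa [hzx] at this
  calc 0 < (1 - ‖z‖) / (1 + ‖z‖) := hpos
    _ ≤ ∫ x : Circle, (1 + 2 * (z * x / (1 - z * x)).re) ∂μ := by
        simpa using integral_mono (integrable_const _)
          ((integrable_const 1).add (hint_re.const_mul 2)) hpt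
    _ = 1 + 2 * (psiM μ z).re := by
        have hre : ∫ x : Circle, (z * x / (1 - z * x)).re ∂μ = (psiM μ z).re := by
          simpa [psiM] using integral_re hint
        rw [integral_add (integrable_const 1) (hint_re.const_mul 2), integral_const_mul, hre]
        simp

lemma norm_psiM_lt_norm_one_add_psiM {z : ℂ} (hz : ‖z‖ < 1) :
    ‖psiM μ z‖ < ‖1 + psiM μ z‖ := by
  have h := one_add_two_mul_re_psiM_pos μ hz
  rw [← sq_lt_sq₀ (norm_nonneg _) (norm_nonneg _), Complex.sq_norm, Complex.sq_norm]
  simp only [normSq_apply, add_re, add_im, one_re, one_im]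
  linarith

lemma one_add_psiM_ne_zero {z : ℂ} (hz : ‖z‖ < 1) : 1 + psiM μ z ≠ 0 :=
  norm_pos_iff.1 ((norm_nonneg _).trans_lt (norm_psiM_lt_norm_one_add_psiM μ hz))

lemma norm_Km_lt_one {z : ℂ} (hz : ‖z‖ < 1) : ‖Km μ z‖ < 1 := by
  rw [Km, norm_div, div_lt_one (norm_pos_iff.2 (one_add_psiM_ne_zero μ hz))]
  exact norm_psiM_lt_norm_one_add_psiM μ hz

lemma mapsTo_Km : MapsTo (Km μ) (ball 0 1) (ball 0 1) := fun z hz => by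
  rw [mem_ball_zero_iff] at hz ⊢
  exact norm_Km_lt_one μ hz

lemma differentiableOn_Km : DifferentiableOn ℂ (Km μ) (ball 0 1) := fun z hz => by
  rw [mem_ball_zero_iff] at hz
  have hψ := (hasDerivAt_psiM μ hz).differentiableAt
  exact (hψ.div (hψ.const_add 1) (one_add_psiM_ne_zero μ hz)).differentiableWithinAt

lemma norm_Km_le {z : ℂ} (hz : ‖z‖ < 1) : ‖Km μ z‖ ≤ ‖z‖ :=
  norm_le_norm_of_mapsTo_ball (differentiableOn_Km μ)
    ((mapsTo_Km μ).mono_right ball_subset_closedBall) (Km_zero μ) hz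

theorem hasDerivAt_Km_zero : HasDerivAt (Km μ) (∫ x : Circle, (x : ℂ) ∂μ) 0 := by
  have hψ : HasDerivAt (psiM μ) (∫ x : Circle, (x : ℂ) ∂μ) 0 := by
    simpa using hasDerivAt_psiM μ (z := 0) (by simp)
  have hψ0 : psiM μ 0 = 0 := by simp [psiM]
  exact (hψ.fun_div (hψ.const_add 1) (one_add_psiM_ne_zero μ (by simp))).congr_deriv
    (by simp [hψ0])

end KTransform

section ParametricCircleIntegral

variable {E : Type*} [NormedAddCommGroup E] [NormedSpace ℂ E]

theorem hasDerivAt_circleIntegral_of_dominated {F F' : ℝ → ℂ → E} {s : Set ℝ}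
    {t₀ R C : ℝ} {c : ℂ} (hR : 0 ≤ R) (hs : s ∈ 𝓝 t₀)
    (hF : ∀ t ∈ s, ContinuousOn (F t) (sphere c R))
    (hF' : ContinuousOn (F' t₀) (sphere c R))
    (hbound : ∀ t ∈ s, ∀ z ∈ sphere c R, ‖F' t z‖ ≤ C)
    (hderiv : ∀ t ∈ s, ∀ z ∈ sphere c R, HasDerivAt (fun t => F t z) (F' t z) t) :
    HasDerivAt (fun t => ∮ z in C(c, R), F t z) (∮ z in C(c, R), F' t₀ z) t₀ := by
  have hmem (θ : ℝ) : circleMap c R θ ∈ sphere c R := circleMap_mem_sphere c hR θ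
  have hcont {f : ℂ → E} (hf : ContinuousOn f (sphere c R)) :
      Continuous fun θ => deriv (circleMap c R) θ • f (circleMap c R θ) := by
    simp only [deriv_circleMap]
    exact ((continuous_circleMap 0 R).mul continuous_const).smul
      (hf.comp_continuous (continuous_circleMap c R) hmem)
  refine (intervalIntegral.hasDerivAt_integral_of_dominated_loc_of_deriv_le
    (F := fun t θ => deriv (circleMap c R) θ • F t (circleMap c R θ))
    (F' := fun t θ => deriv (circleMap c R) θ • F' t (circleMap c R θ))
    (bound := fun _ => R * C) hs ?_
    ((hcont (hF t₀ (mem_of_mem_nhds hs))).intervalIntegrable _ _)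
    (hcont hF').aestronglyMeasurable ?_ intervalIntegrable_const ?_).2
  · exact eventually_of_mem hs fun t ht => (hcont (hF t ht)).aestronglyMeasurable
  · refine .of_forall fun θ _ t ht => ?_
    rw [norm_smul, deriv_circleMap, norm_mul, norm_circleMap_zero, abs_of_nonneg hR, norm_I,
      mul_one]
    exact mul_le_mul_of_nonneg_left (hbound t ht _ (hmem θ)) hR
  · exact .of_forall fun θ _ t ht => (hderiv t ht _ (hmem θ)).const_smul _

theorem hasDerivAt_deriv_of_forall_hasDerivAt [CompleteSpace E] {F G : ℝ → ℂ → E}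
    {s : Set ℝ} {t₀ R C : ℝ} {c : ℂ} (hR : 0 < R) (hs : s ∈ 𝓝 t₀)
    (hF : ∀ t ∈ s, DifferentiableOn ℂ (F t) (closedBall c R))
    (hG : DifferentiableOn ℂ (G t₀) (closedBall c R))
    (hbound : ∀ t ∈ s, ∀ z ∈ sphere c R, ‖G t z‖ ≤ C)
    (hderiv : ∀ t ∈ s, ∀ z ∈ sphere c R, HasDerivAt (fun t => F t z) (G t z) t) :
    HasDerivAt (fun t => deriv (F t) c) (deriv (G t₀) c) t₀ := by
  have hcauchy {f : ℂ → E} (hf : DifferentiableOn ℂ f (closedBall c R)) :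
      deriv f c = (2 * Real.pi * I)⁻¹ • ∮ z in C(c, R), (1 / (z - c) ^ 2) • f z := by
    rw [hf.deriv_eq_smul_circleIntegral hR, inv_smul_smul₀ two_pi_I_ne_zero]
  have hkernel : ContinuousOn (fun z : ℂ => 1 / (z - c) ^ 2) (sphere c R) :=
    continuousOn_const.div ((continuousOn_id.sub continuousOn_const).pow 2) fun z hz => by
      rw [mem_sphere_iff_norm] at hz
      exact pow_ne_zero _ (norm_pos_iff.1 (hz ▸ hR))
  have hcircle : HasDerivAt (fun t => ∮ z in C(c, R), (1 / (z - c) ^ 2) • F t z)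
      (∮ z in C(c, R), (1 / (z - c) ^ 2) • G t₀ z) t₀ := by
    refine hasDerivAt_circleIntegral_of_dominated (C := (R ^ 2)⁻¹ * C) hR.le hs
      (fun t ht => hkernel.smul ((hF t ht).continuousOn.mono sphere_subset_closedBall))
      (hkernel.smul (hG.continuousOn.mono sphere_subset_closedBall)) (fun t ht z hz => ?_)
      fun t ht z hz => (hderiv t ht z hz).const_smul _
    rw [mem_sphere_iff_norm] at hz
    rw [norm_smul, norm_div, norm_one, norm_pow, hz, one_div]
    exact mul_le_mul_of_nonneg_left (hbound t ht z (mem_sphere_iff_norm.2 hz)) (by positivity)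
  rw [hcauchy hG]
  exact (hcircle.const_smul _).congr_of_eventuallyEq
    (eventually_of_mem hs fun t ht => hcauchy (hF t ht))

end ParametricCircleIntegral

theorem eq_exp_mul_of_hasDerivAt {m : ℝ → ℂ} {c : ℂ} (hm : ContinuousOn m (Ici 0))
    (hm' : ∀ t > 0, HasDerivAt m (-c * m t) t) {t : ℝ} (ht : 0 ≤ t) :
    m t = exp (-t * c) * m 0 := by
  set h : ℝ → ℂ := fun t => exp (t * c) * m t with h_def
  have hh' (x : ℝ) (hx : 0 < x) : HasDerivAt h 0 x := by
    have hexp : HasDerivAt (fun x : ℝ => exp (x * c)) (exp (x * c) * c) x :=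
      (((hasDerivAt_id (x : ℂ)).mul_const c).cexp.comp_ofReal).congr_deriv (by simp)
    exact (hexp.mul (hm' x hx)).congr_deriv (by ring)
  have hhc : ContinuousOn h (Ici 0) :=
    (continuous_ofReal.mul continuous_const).cexp.continuousOn.mul hm
  have hh0 : HasDerivWithinAt h 0 (Ici 0) 0 :=
    hasDerivWithinAt_Ici_of_tendsto_deriv (s := Ioi 0)
      (fun x hx => (hh' x hx).differentiableAt.differentiableWithinAt)
      ((hhc 0 self_mem_Ici).mono Ioi_subset_Ici_self) self_mem_nhdsWithin
      (tendsto_const_nhds.congr'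
        (eventually_nhdsWithin_of_forall fun x hx => (hh' x hx).deriv.symm))
  have hconst : h t = h 0 := by
    refine constant_of_has_deriv_right_zero (hhc.mono Icc_subset_Ici_self) (fun x hx => ?_) t
      ⟨ht, le_rfl⟩
    rcases hx.1.eq_or_lt with rfl | hx0
    · exact hh0
    · exact (hh' x hx0).hasDerivWithinAt
  simp only [h_def, ofReal_zero, zero_mul, Complex.exp_zero, one_mul] at hconst
  rw [← hconst, ← mul_assoc, ← exp_add]
  simp

theorem continuousOn_integral_of_forall_continuousMap {X : Type*} [TopologicalSpace X]
    {μ : X → Measure Circle} {s : Set X} (hfin : ∀ t ∈ s, IsFiniteMeasure (μ t))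
    (hcont : ∀ f : C(Circle, ℝ), ContinuousOn (fun t => ∫ x, f x ∂μ t) s) (g : C(Circle, ℂ)) :
    ContinuousOn (fun t => ∫ x, g x ∂μ t) s := by
  have hre := hcont ⟨fun x => (g x).re, by fun_prop⟩
  have him := hcont ⟨fun x => (g x).im, by fun_prop⟩
  refine ((continuous_ofReal.comp_continuousOn hre).add
    ((continuous_ofReal.comp_continuousOn him).mul (continuousOn_const (c := I)))).congr
    fun t ht => ?_
  have := hfin t ht
  exact (integral_re_add_im
    (g.continuous.integrable_of_hasCompactSupport (.of_compactSpace _))).symm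

theorem hasDerivAt_integral_coe_of_hasDerivAt_Km {μ : ℝ → Measure Circle}
    (hprob : ∀ t > 0, IsProbabilityMeasure (μ t)) {u : ℂ → ℂ}
    (hu : DifferentiableOn ℂ u (ball 0 1))
    (hode : ∀ z ∈ ball (0 : ℂ) 1, ∀ t > 0,
      HasDerivAt (fun s => Km (μ s) z) (-(Km (μ t) z) * u (Km (μ t) z)) t)
    {t₀ : ℝ} (ht₀ : 0 < t₀) :
    HasDerivAt (fun t => ∫ x : Circle, (x : ℂ) ∂μ t) (-u 0 * ∫ x : Circle, (x : ℂ) ∂μ t₀) t₀ := by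
  have hsub : closedBall (0 : ℂ) (1 / 2) ⊆ ball 0 1 := closedBall_subset_ball (by norm_num)
  obtain ⟨M, hM⟩ : ∃ M, ∀ z ∈ closedBall (0 : ℂ) (1 / 2), ‖u z‖ ≤ M :=
    (isCompact_closedBall 0 _).exists_bound_of_continuousOn (hu.continuousOn.mono hsub)
  have hsphere {z : ℂ} (hz : z ∈ sphere (0 : ℂ) (1 / 2)) : ‖z‖ < 1 := by
    rw [mem_sphere_zero_iff_norm.1 hz]; norm_num
  set G : ℝ → ℂ → ℂ := fun t z => -(Km (μ t) z) * u (Km (μ t) z)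
  have hG : DifferentiableOn ℂ (G t₀) (closedBall 0 (1 / 2)) := by
    have := hprob t₀ ht₀
    exact ((differentiableOn_Km _).neg.mul
      (hu.comp (differentiableOn_Km _) (mapsTo_Km _))).mono hsub
  have hbound (t : ℝ) (ht : t ∈ Ioi 0) (z : ℂ) (hz : z ∈ sphere (0 : ℂ) (1 / 2)) :
      ‖G t z‖ ≤ M := by
    have := hprob t ht
    have hKz : ‖Km (μ t) z‖ ≤ 1 / 2 :=
      (norm_Km_le _ (hsphere hz)).trans_eq (mem_sphere_zero_iff_norm.1 hz)
    rw [norm_mul, norm_neg]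
    exact (mul_le_of_le_one_left (norm_nonneg _) (hKz.trans (by norm_num))).trans
      (hM _ (mem_closedBall_zero_iff.2 hKz))
  have hGderiv : HasDerivAt (G t₀) (-u 0 * ∫ x : Circle, (x : ℂ) ∂μ t₀) 0 := by
    have := hprob t₀ ht₀
    have hK := hasDerivAt_Km_zero (μ t₀)
    have hu0 : HasDerivAt u (deriv u 0) (Km (μ t₀) 0) := by
      rw [Km_zero]
      exact (hu.differentiableAt (ball_mem_nhds 0 one_pos)).hasDerivAt
    exact (hK.neg.mul (hu0.comp 0 hK)).congr_deriv (by simp; ring)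
  have hcomm := hasDerivAt_deriv_of_forall_hasDerivAt (F := fun t => Km (μ t)) (c := 0)
    (by norm_num) (Ioi_mem_nhds ht₀)
    (fun t ht => have := hprob t ht; (differentiableOn_Km _).mono hsub) hG hbound
    fun t ht z hz => hode z (mem_ball_zero_iff.2 (hsphere hz)) t ht
  rw [hGderiv.deriv] at hcomm
  exact hcomm.congr_of_eventuallyEq (eventually_of_mem (Ioi_mem_nhds ht₀) fun t ht =>
    (have := hprob t ht; hasDerivAt_Km_zero (μ t)).deriv.symm)

theorem Ksemigroup_first_moment_general
    (μ : ℝ → Measure Circle)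
    (hprob : ∀ t ≥ (0 : ℝ), IsProbabilityMeasure (μ t))
    (h0 : μ 0 = Measure.dirac 1)
    (hcont : ∀ f : C(Circle, ℝ), ContinuousOn (fun t => ∫ x, f x ∂(μ t)) (Ici 0))
    (u : ℂ → ℂ)
    (hu : DifferentiableOn ℂ u (ball (0 : ℂ) 1))
    (hode : ∀ z ∈ ball (0 : ℂ) 1, ∀ t ≥ (0 : ℝ),
      HasDerivWithinAt (fun s => Km (μ s) z) (-(Km (μ t) z) * u (Km (μ t) z)) (Ici 0) t) :
    ∀ t ≥ (0 : ℝ),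
      HasDerivAt (Km (μ t)) (Complex.exp (-(t : ℂ) * u 0)) 0 ∧
      ∫ x : Circle, (x : ℂ) ∂(μ t) = Complex.exp (-(t : ℂ) * u 0) := by
  have hmoment_cont : ContinuousOn (fun t => ∫ x : Circle, (x : ℂ) ∂μ t) (Ici 0) :=
    continuousOn_integral_of_forall_continuousMap (fun t ht => have := hprob t ht; inferInstance)
      hcont ⟨(↑), continuous_subtype_val⟩
  have hmoment_deriv (t : ℝ) (ht : 0 < t) :
      HasDerivAt (fun t => ∫ x : Circle, (x : ℂ) ∂μ t) (-u 0 * ∫ x : Circle, (x : ℂ) ∂μ t) t :=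
    hasDerivAt_integral_coe_of_hasDerivAt_Km (fun t ht => hprob t ht.le) hu
      (fun z hz t ht => (hode z hz t ht.le).hasDerivAt (Ici_mem_nhds ht)) ht
  have hmoment_zero : ∫ x : Circle, (x : ℂ) ∂μ 0 = 1 := by simp [h0]
  have hmoment (t : ℝ) (ht : 0 ≤ t) : ∫ x : Circle, (x : ℂ) ∂μ t = exp (-t * u 0) := by
    rw [eq_exp_mul_of_hasDerivAt hmoment_cont hmoment_deriv ht, hmoment_zero, mul_one]
  intro t ht
  have := hprob t ht
  exact ⟨hmoment t ht ▸ hasDerivAt_Km_zero (μ t), hmoment t ht⟩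

/-- For a continuous monotone convolution semigroup `(μ_t)` on the unit circle with
generator `u` (so `d/dt K_t(z) = -K_t(z) u(K_t(z))` for the K-transforms
`K_t = K_{μ_t}`), one has `K_t'(0) = e^{-t u(0)}`, and this is the first moment of
`μ_t`: `∫_{S¹} x dμ_t(x) = e^{-t u(0)}`. -/
theorem Ksemigroup_first_moment
    (μ : ℝ → Measure Circle)
    (hprob : ∀ t ≥ (0 : ℝ), IsProbabilityMeasure (μ t))
    (h0 : μ 0 = Measure.dirac 1)
    (hsg : ∀ s ≥ (0 : ℝ), ∀ t ≥ (0 : ℝ), ∀ z ∈ ball (0 : ℂ) 1,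
      Km (μ (s + t)) z = Km (μ s) (Km (μ t) z))
    (hcont : ∀ f : C(Circle, ℝ), ContinuousOn (fun t => ∫ x, f x ∂(μ t)) (Ici 0))
    (u : ℂ → ℂ)
    (hu : DifferentiableOn ℂ u (ball (0 : ℂ) 1))
    (hure : ∀ z ∈ ball (0 : ℂ) 1, 0 ≤ (u z).re)
    (hode : ∀ z ∈ ball (0 : ℂ) 1, ∀ t ≥ (0 : ℝ),
      HasDerivWithinAt (fun s => Km (μ s) z) (-(Km (μ t) z) * u (Km (μ t) z)) (Ici 0) t) :
    ∀ t ≥ (0 : ℝ),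
      HasDerivAt (Km (μ t)) (Complex.exp (-(t : ℂ) * u 0)) 0 ∧
      ∫ x : Circle, (x : ℂ) ∂(μ t) = Complex.exp (-(t : ℂ) * u 0) :=
  Ksemigroup_first_moment_general μ hprob h0 hcont u hu hode
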